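/- FindSeeds (Algorithm 1), which enumerates subsets of the body in increasing size, skips all supersets of failed candidates' complements via the constant-time IsAbsent check, and recurses on the remaining statements after finding a seed, terminates on every finite input and outputs only sets satisfying the sufficiency condition M(output) = ℓ. -/

import Mathlib

open scoped Classical

/-- One step of the seed search: pick a minimal-size nonempty candidate subset
of `B` whose prediction is `ℓ` and whose proper subsets all fail. -/
noncomputable def pickSeed {S L : Type*} [DecidableEq S]
    (M : Finset S → L) (ℓ : L) (B : Finset S) : Option (Finset S) :=
  (B.powerset.filter
    (fun A => A.Nonempty ∧ M A = ℓ ∧ ∀ A' : Finset S, A' ⊂ A → M A' ≠ ℓ)).toList.head?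

/-- `FindSeeds` (Algorithm 1), with fuel witnessing termination: find a seed of
the current set of statements; if the complement may still contain seeds
(`IsAbsent` fails, i.e. `M (B \ s) = ℓ`), recurse on the complement. -/
noncomputable def findSeedsAux {S L : Type*} [DecidableEq S]
    (M : Finset S → L) (ℓ : L) : ℕ → Finset S → Finset (Finset S)
  | 0, _ => ∅
  | fuel + 1, B =>
    match pickSeed M ℓ B with
    | none => ∅
    | some s =>
      if M (B \ s) = ℓ then insert s (findSeedsAux M ℓ fuel (B \ s)) else {s}

/-- `FindSeeds` terminates on every finite input (it is a total function, with
fuel `B.card` sufficing since the recursion argument strictly decreases). -/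
noncomputable def findSeeds {S L : Type*} [DecidableEq S]
    (M : Finset S → L) (ℓ : L) (B : Finset S) : Finset (Finset S) :=
  findSeedsAux M ℓ B.card B

section FindSeeds

variable {S L : Type*} [DecidableEq S] (M : Finset S → L) (ℓ : L)

theorem prediction_eq_of_pickSeed_eq_some {B s : Finset S} (hs : pickSeed M ℓ B = some s) :
    M s = ℓ := by
  have hmem := List.mem_of_mem_head? hs
  rw [Finset.mem_toList, Finset.mem_filter] at hmem
  exact hmem.2.2.1

theorem prediction_eq_of_mem_findSeedsAux :
    ∀ (fuel : ℕ) (B A : Finset S), A ∈ findSeedsAux M ℓ fuel B → M A = ℓ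
  | 0, _, _, hA => by simp [findSeedsAux] at hA
  | fuel + 1, B, A, hA => by
    rw [findSeedsAux] at hA
    rcases hpick : pickSeed M ℓ B with _ | s
    · simp [hpick] at hA
    · have hseed := prediction_eq_of_pickSeed_eq_some M ℓ hpick
      simp only [hpick] at hA
      split_ifs at hA
      · rcases Finset.mem_insert.mp hA with rfl | hrec
        · exact hseed
        · exact prediction_eq_of_mem_findSeedsAux fuel _ A hrec
      · rwa [Finset.mem_singleton.mp hA]

end FindSeeds

/-- Soundness of `FindSeeds`: every output set satisfies the sufficiency
condition `M A = ℓ`. -/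
theorem findSeeds_sound {S L : Type*} [DecidableEq S]
    (M : Finset S → L) (ℓ : L) (B : Finset S) :
    ∀ A ∈ findSeeds M ℓ B, M A = ℓ :=
  fun A hA => prediction_eq_of_mem_findSeedsAux M ℓ B.card B A hA
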